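/- arXiv:math/0410545 — 2 statements merged into one kernel-verified Lean document; each statement's English description precedes it below -/
import Mathlib

section
/- Let P be a lazy, irreducible, aperiodic Markov chain on a finite state space K with stationary distribution π, and let A ⊆ K with 0 < π(A) ≤ 1/2. Then ψ̄_mod(A) ≥ ∫₀¹ (π(A_u)/π(A))·log(π(A_u)/π(A)) du (with the convention 0·log 0 = 0). -/
open Finset MeasureTheory

noncomputable section

attribute [local instance] Classical.propDecidable

variable {K : Type*} [Fintype K]

/-- `matPow P t u v` is the `t`-step transition probability from `u` to `v`. -/
def matPow (P : K → K → ℝ) : ℕ → K → K → ℝ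
  | 0 => fun u v => if u = v then 1 else 0
  | (t + 1) => fun u v => ∑ w, matPow P t u w * P w v

/-- `P` is a stochastic matrix with (strictly positive) stationary distribution `π`. -/
structure IsMarkov (P : K → K → ℝ) (π : K → ℝ) : Prop where
  nonneg : ∀ u v, 0 ≤ P u v
  rowSum : ∀ u, ∑ v, P u v = 1
  piPos : ∀ v, 0 < π v
  piSum : ∑ v, π v = 1
  stationary : ∀ v, ∑ u, π u * P u v = π v

/-- `P` is lazy: every holding probability is at least `1/2`. -/
def IsLazy (P : K → K → ℝ) : Prop := ∀ u, (1 : ℝ) / 2 ≤ P u u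

/-- irreducibility: every state can reach every other state. -/
def MCIrreducible (P : K → K → ℝ) : Prop := ∀ u v : K, ∃ t : ℕ, 0 < matPow P t u v

/-- aperiodicity: the gcd of the return times of every state is `1`. -/
def MCAperiodic (P : K → K → ℝ) : Prop :=
  ∀ u : K, ∀ d : ℕ, (∀ t : ℕ, 0 < matPow P t u u → d ∣ t) → d ≤ 1

/-- reversibility: the detailed balance condition. -/
def IsReversible (P : K → K → ℝ) (π : K → ℝ) : Prop :=
  ∀ u v, π u * P u v = π v * P v u

/-- `π`-measure of a set. -/
def meas (π : K → ℝ) (A : Finset K) : ℝ := ∑ v ∈ A, π v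

/-- the time reversal `P̄(u,v) = π(v) P(v,u) / π(u)`. -/
def rev (P : K → K → ℝ) (π : K → ℝ) (u v : K) : ℝ := π v * P v u / π u

/-- transition probability from a point into a set, w.r.t. kernel `R`. -/
def setProb (R : K → K → ℝ) (v : K) (C : Finset K) : ℝ := ∑ c ∈ C, R v c

/-- the level set `A_u = {y : R(y,A) > u}`, w.r.t. kernel `R`. -/
def levelSet (R : K → K → ℝ) (A : Finset K) (u : ℝ) : Finset K :=
  Finset.univ.filter (fun y => u < setProb R y A)

/-- `g` is a fractional subset of `S` of measure `t`. -/
def IsFracSub (π : K → ℝ) (S : Finset K) (g : K → ℝ) (t : ℝ) : Prop :=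
  (∀ v, 0 ≤ g v ∧ g v ≤ 1) ∧ (∀ v ∉ S, g v = 0) ∧ ∑ v, g v * π v = t

/-- ergodic flow from a fractional subset `g` into `C`, w.r.t. kernel `R`. -/
def fracFlow (R : K → K → ℝ) (π : K → ℝ) (g : K → ℝ) (C : Finset K) : ℝ :=
  ∑ v, g v * π v * setProb R v C

/-- `Ψ(t, Aᶜ)` w.r.t. kernel `R`: for `t ≤ π(A)` the minimal flow into `Aᶜ` from a
fractional subset of `A` of measure `t`; for `t > π(A)` the minimal flow into `A`
from a fractional subset of `Aᶜ` of measure `1 − t`. -/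
def Psi (R : K → K → ℝ) (π : K → ℝ) (A : Finset K) (t : ℝ) : ℝ :=
  if t ≤ meas π A then
    sInf {q : ℝ | ∃ g : K → ℝ, IsFracSub π A g t ∧ q = fracFlow R π g Aᶜ}
  else
    sInf {q : ℝ | ∃ g : K → ℝ, IsFracSub π Aᶜ g (1 - t) ∧ q = fracFlow R π g A}

/-- `Ψ_big(t, Aᶜ)` w.r.t. kernel `R`: maximal flow into `Aᶜ` from a fractional
subset of `A` of measure `t`. -/
def PsiSup (R : K → K → ℝ) (π : K → ℝ) (A : Finset K) (t : ℝ) : ℝ :=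
  sSup {q : ℝ | ∃ g : K → ℝ, IsFracSub π A g t ∧ q = fracFlow R π g Aᶜ}

/-- the spread `ψ⁺(A)` (w.r.t. kernel `R`). -/
def psiPlus (R : K → K → ℝ) (π : K → ℝ) (A : Finset K) : ℝ :=
  (∫ t in (0:ℝ)..(meas π A), Psi R π A t) / (meas π A) ^ 2

/-- the quantity `ψ⁻(A)` (w.r.t. kernel `R`). -/
def psiMinus (R : K → K → ℝ) (π : K → ℝ) (A : Finset K) : ℝ :=
  (∫ t in (meas π A)..(1:ℝ), Psi R π A t) / (meas π A) ^ 2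

/-- the modified spread `ψ_mod(A)` (w.r.t. kernel `R`). -/
def psiMod (R : K → K → ℝ) (π : K → ℝ) (A : Finset K) : ℝ :=
  (∫ t in (0:ℝ)..(1:ℝ), Psi R π A t / min t (1 - t)) / meas π A

/-- the global spread `ψ_gl(A)` (w.r.t. kernel `R`). -/
def psiGl (R : K → K → ℝ) (π : K → ℝ) (A : Finset K) : ℝ :=
  (∫ t in (0:ℝ)..(1:ℝ), Psi R π A t) / (meas π A) ^ 2

/-- the quantity `ψ_big(A)` (w.r.t. kernel `R`). -/
def psiBig (R : K → K → ℝ) (π : K → ℝ) (A : Finset K) : ℝ :=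
  (∫ t in (0:ℝ)..(meas π A), PsiSup R π A t) / (meas π A) ^ 2

/-- the evolving-set quantity `ψ_evo(A)`, with level sets taken w.r.t. kernel `R`. -/
def psiEvo (R : K → K → ℝ) (π : K → ℝ) (A : Finset K) : ℝ :=
  1 - ∫ u in (0:ℝ)..(1:ℝ), Real.sqrt (meas π (levelSet R A u) / meas π A)

/-- ergodic flow `Q(B,C)`. -/
def ergFlow (P : K → K → ℝ) (π : K → ℝ) (B C : Finset K) : ℝ :=
  ∑ u ∈ B, ∑ v ∈ C, π u * P u v

/-- conductance `Φ(A)`. -/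
def conductance (P : K → K → ℝ) (π : K → ℝ) (A : Finset K) : ℝ :=
  ergFlow P π A Aᶜ / meas π A

def Qone (P : K → K → ℝ) (π : K → ℝ) (C D : Finset K) : ℝ :=
  ∑ v ∈ C, setProb P v D * π v

def Qtwo (P : K → K → ℝ) (π : K → ℝ) (C D : Finset K) : ℝ :=
  ∑ v ∈ C, Real.sqrt (setProb P v D) * π v

def Qinfty (P : K → K → ℝ) (π : K → ℝ) (C D : Finset K) : ℝ :=
  meas π (C.filter (fun v => 0 < setProb P v D))

/-- discrete gradient `h₁⁺(A)`. -/
def hOneP (P : K → K → ℝ) (π : K → ℝ) (A : Finset K) : ℝ :=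
  Qone P π A Aᶜ / min (meas π A) (meas π Aᶜ)

/-- discrete gradient `h₁⁻(A)`. -/
def hOneM (P : K → K → ℝ) (π : K → ℝ) (A : Finset K) : ℝ :=
  Qone P π Aᶜ A / min (meas π A) (meas π Aᶜ)

/-- discrete gradient `h₂⁺(A)`. -/
def hTwoP (P : K → K → ℝ) (π : K → ℝ) (A : Finset K) : ℝ :=
  Qtwo P π A Aᶜ / min (meas π A) (meas π Aᶜ)

/-- discrete gradient `h₂⁻(A)`. -/
def hTwoM (P : K → K → ℝ) (π : K → ℝ) (A : Finset K) : ℝ :=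
  Qtwo P π Aᶜ A / min (meas π A) (meas π Aᶜ)

/-- discrete gradient `h_∞⁺(A)`. -/
def hInfP (P : K → K → ℝ) (π : K → ℝ) (A : Finset K) : ℝ :=
  Qinfty P π A Aᶜ / min (meas π A) (meas π Aᶜ)

/-- discrete gradient `h_∞⁻(A)`. -/
def hInfM (P : K → K → ℝ) (π : K → ℝ) (A : Finset K) : ℝ :=
  Qinfty P π Aᶜ A / min (meas π A) (meas π Aᶜ)

/-- `p` is a probability distribution. -/
def IsDist (p : K → ℝ) : Prop := (∀ v, 0 ≤ p v) ∧ ∑ v, p v = 1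

/-- the distribution after `t` steps starting from `p`. -/
def stepDist (P : K → K → ℝ) (p : K → ℝ) (t : ℕ) (v : K) : ℝ :=
  ∑ u, p u * matPow P t u v

/-- total variation distance. -/
def tvDist (μ π : K → ℝ) : ℝ := (1 / 2) * ∑ v, |μ v - π v|

/-- chi-square distance. -/
def chi2Dist (μ π : K → ℝ) : ℝ := ∑ v, (μ v / π v - 1) ^ 2 * π v

/-- total variation mixing time `τ(ε)`: the max over initial distributions of the
least time at which total variation distance drops to `ε`. -/
def mixTV (P : K → K → ℝ) (π : K → ℝ) (ε : ℝ) : ℕ :=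
  sSup {n : ℕ | ∃ p : K → ℝ, IsDist p ∧
    n = sInf {t : ℕ | tvDist (stepDist P p t) π ≤ ε}}

/-- chi-square mixing time `χ²(ε)`. -/
def mixChi2 (P : K → K → ℝ) (π : K → ℝ) (ε : ℝ) : ℕ :=
  sSup {n : ℕ | ∃ p : K → ℝ, IsDist p ∧
    n = sInf {t : ℕ | chi2Dist (stepDist P p t) π ≤ ε}}

/-- `π₀ = min_v π(v)`. -/
def piMin (π : K → ℝ) : ℝ := sInf {r : ℝ | ∃ v : K, r = π v}

/-- `ψ⁺(x)`: worst spread over sets of measure at most `x`. -/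
def psiPlusSize (R : K → K → ℝ) (π : K → ℝ) (x : ℝ) : ℝ :=
  sInf {r : ℝ | ∃ A : Finset K, 0 < meas π A ∧ meas π A ≤ x ∧ r = psiPlus R π A}

/-- `ψ_evo(x)`: worst evolving-set quantity over sets of measure at most `x`. -/
def psiEvoSize (R : K → K → ℝ) (π : K → ℝ) (x : ℝ) : ℝ :=
  sInf {r : ℝ | ∃ A : Finset K, 0 < meas π A ∧ meas π A ≤ x ∧ r = psiEvo R π A}

/-- `ψ_big(x)`: worst `ψ_big` over sets of measure at most `x`. -/
def psiBigSize (R : K → K → ℝ) (π : K → ℝ) (x : ℝ) : ℝ :=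
  sInf {r : ℝ | ∃ A : Finset K, 0 < meas π A ∧ meas π A ≤ x ∧ r = psiBig R π A}

/-- Dirichlet form. -/
def dirichletForm (P : K → K → ℝ) (π : K → ℝ) (f : K → ℝ) : ℝ :=
  (1 / 2) * ∑ u, ∑ v, π u * P u v * (f u - f v) ^ 2

/-- variance w.r.t. `π`. -/
def varPi (π : K → ℝ) (f : K → ℝ) : ℝ :=
  ∑ v, π v * f v ^ 2 - (∑ v, π v * f v) ^ 2

/-- the spectral gap `λ`. -/
def specGap (P : K → K → ℝ) (π : K → ℝ) : ℝ :=
  sInf {r : ℝ | ∃ f : K → ℝ, (∃ u v, f u ≠ f v) ∧ r = dirichletForm P π f / varPi π f}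

/-- `P_* = 1 − min_{u ∈ A} P(u, A)`. -/
def Pstar (P : K → K → ℝ) (A : Finset K) : ℝ :=
  1 - sInf {r : ℝ | ∃ u ∈ A, r = setProb P u A}

/-- `P_min = min {P(u,v)/π(v) : u ∈ A, v ∈ Aᶜ, P(u,v) > 0}`. -/
def PminEdge (P : K → K → ℝ) (π : K → ℝ) (A : Finset K) : ℝ :=
  sInf {r : ℝ | ∃ u ∈ A, ∃ v ∈ Aᶜ, 0 < P u v ∧ r = P u v / π v}

/-- `w(t) = inf {y ∈ [0,1] : π(A_y) ≤ t}`. -/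
def wfun (R : K → K → ℝ) (π : K → ℝ) (A : Finset K) (t : ℝ) : ℝ :=
  sInf {y : ℝ | y ∈ Set.Icc (0:ℝ) 1 ∧ meas π (levelSet R A y) ≤ t}

/-!
Write `a u = π(A_u)` and `m = π(A)`. Since `R(v, A) = ∫₀¹ 1[u < R(v, A)] du`, the flow
into `A` of a fractional subset `g` of mass `t` is `∫₀¹ (gπ)(A_u) du`, and `(gπ)(B)`
always lies between `t - π(Bᶜ)` and `min t (π B)`. This gives `Ψ(t) ≥ ∫₀¹ (t - a u)⁺ du`
for `t ≤ m` and `Ψ(t) ≥ ∫₀¹ (a u - t)⁺ du` for `t > m`. Dividing by `t ≥ min t (1 - t)`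
and integrating over `t` first, each `u` contributes `a log (a / m) - a + m`, and
`∫₀¹ a = m`. Nothing beyond stationarity of `π` is used, so the argument runs for any
Markov kernel `R`, in particular for the time reversal `P̄`.
-/

theorem levelSet_antitone (R : K → K → ℝ) (A : Finset K) : Antitone (levelSet R A) :=
  fun _ _ huv _ hv => by
    simp only [levelSet, Finset.mem_filter, Finset.mem_univ, true_and] at hv ⊢
    exact huv.trans_lt hv

theorem antitone_sum_levelSet (R : K → K → ℝ) (A : Finset K) {w : K → ℝ}
    (hw : ∀ v, 0 ≤ w v) : Antitone fun u => ∑ v ∈ levelSet R A u, w v := fun _ _ huv =>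
  Finset.sum_le_sum_of_subset_of_nonneg (levelSet_antitone R A huv) fun v _ _ => hw v

theorem integral_Ioc_zero_one_indicator_Iio {p : ℝ} (h0 : 0 ≤ p) (h1 : p ≤ 1) (c : ℝ) :
    ∫ u in Set.Ioc (0:ℝ) 1, (Set.Iio p).indicator (fun _ => c) u = c * p := by
  have hset : Set.Ioc (0:ℝ) 1 ∩ Set.Iio p = Set.Ioo 0 p := by
    ext u
    simp only [Set.mem_inter_iff, Set.mem_Ioc, Set.mem_Iio, Set.mem_Ioo]
    constructor
    · rintro ⟨⟨hu0, -⟩, hup⟩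
      exact ⟨hu0, hup⟩
    · rintro ⟨hu0, hup⟩
      exact ⟨⟨hu0, hup.le.trans h1⟩, hup⟩
  rw [setIntegral_indicator measurableSet_Iio, hset, setIntegral_const,
    Real.volume_real_Ioo_of_le h0, sub_zero, smul_eq_mul, mul_comm]

namespace IsFracSub

variable {π : K → ℝ} {S : Finset K} {g : K → ℝ} {t : ℝ} (hg : IsFracSub π S g t)
include hg

theorem sum_le_mass (hπ : ∀ v, 0 ≤ π v) (B : Finset K) : ∑ v ∈ B, g v * π v ≤ t :=
  hg.2.2 ▸ Finset.sum_le_sum_of_subset_of_nonneg (Finset.subset_univ B)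
    fun v _ _ => mul_nonneg (hg.1 v).1 (hπ v)

theorem sum_le_meas (hπ : ∀ v, 0 ≤ π v) (B : Finset K) :
    ∑ v ∈ B, g v * π v ≤ meas π B :=
  Finset.sum_le_sum fun v _ => mul_le_of_le_one_left (hπ v) (hg.1 v).2

theorem mass_sub_meas_compl_le_sum (hπ : ∀ v, 0 ≤ π v) (B : Finset K) :
    t - meas π Bᶜ ≤ ∑ v ∈ B, g v * π v := by
  have hsplit := Finset.sum_add_sum_compl B fun v => g v * π v
  rw [hg.2.2] at hsplit
  linarith [hg.sum_le_meas hπ Bᶜ]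

theorem smul {c : ℝ} (hc0 : 0 ≤ c) (hc1 : c ≤ 1) : IsFracSub π S (c • g) (c * t) :=
  ⟨fun v => ⟨mul_nonneg hc0 (hg.1 v).1, mul_le_one₀ hc1 (hg.1 v).1 (hg.1 v).2⟩,
    fun v hv => by simp [hg.2.1 v hv],
    by simp_rw [Pi.smul_apply, smul_eq_mul, mul_assoc, ← Finset.mul_sum, hg.2.2]⟩

end IsFracSub

theorem exists_isFracSub {π : K → ℝ} {B : Finset K} {t : ℝ} (hB : 0 < meas π B)
    (ht0 : 0 ≤ t) (htB : t ≤ meas π B) : ∃ g, IsFracSub π B g t := by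
  refine ⟨fun v => if v ∈ B then t / meas π B else 0, fun v => ?_, fun v hv => if_neg hv, ?_⟩
  · dsimp only
    split_ifs
    · exact ⟨div_nonneg ht0 hB.le, (div_le_one hB).2 htB⟩
    · exact ⟨le_rfl, zero_le_one⟩
  · simp_rw [ite_mul, zero_mul, Finset.sum_ite_mem, Finset.univ_inter, ← Finset.mul_sum]
    exact div_mul_cancel₀ t hB.ne'

theorem fracFlow_smul (R : K → K → ℝ) (π g : K → ℝ) (C : Finset K) (c : ℝ) :
    fracFlow R π (c • g) C = c * fracFlow R π g C := by
  simp_rw [fracFlow, Finset.mul_sum, Pi.smul_apply, smul_eq_mul, mul_assoc]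

def minFlow (R : K → K → ℝ) (π : K → ℝ) (B C : Finset K) (t : ℝ) : ℝ :=
  sInf {q : ℝ | ∃ g : K → ℝ, IsFracSub π B g t ∧ q = fracFlow R π g C}

theorem le_minFlow {R : K → K → ℝ} {π : K → ℝ} {B C : Finset K} (hB : 0 < meas π B)
    {t L : ℝ} (ht0 : 0 ≤ t) (htB : t ≤ meas π B)
    (hL : ∀ g, IsFracSub π B g t → L ≤ fracFlow R π g C) : L ≤ minFlow R π B C t := by
  obtain ⟨g, hg⟩ := exists_isFracSub hB ht0 htB
  exact le_csInf ⟨_, g, hg, rfl⟩ fun _ ⟨g, hg, hq⟩ => hq ▸ hL g hg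

theorem Psi_of_le {R : K → K → ℝ} {π : K → ℝ} {A : Finset K} {t : ℝ}
    (ht : t ≤ meas π A) :
    Psi R π A t = minFlow R π A Aᶜ t :=
  if_pos ht

theorem Psi_of_lt {R : K → K → ℝ} {π : K → ℝ} {A : Finset K} {t : ℝ}
    (ht : meas π A < t) :
    Psi R π A t = minFlow R π Aᶜ A (1 - t) :=
  if_neg ht.not_ge

def entropyKernel (m t a : ℝ) : ℝ := (if t ≤ m then max (t - a) 0 else max (a - t) 0) / t

section EntropyKernel

variable {m a : ℝ}

theorem entropyKernel_eq_indicator_sub (ha : 0 ≤ a) (hm : 0 < m) (t : ℝ) :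
    entropyKernel m t a = (Set.Ioc a m).indicator (fun t => 1 - a / t) t
      - (Set.Ioc m a).indicator (fun t => 1 - a / t) t := by
  rcases le_or_gt t m with htm | htm <;> rcases le_or_gt t a with hta | hta
  · simp [entropyKernel, htm, hta, hta.not_gt]
  · rw [entropyKernel, if_pos htm, max_eq_left (sub_nonneg.2 hta.le),
      Set.indicator_of_mem (show t ∈ Set.Ioc a m from ⟨hta, htm⟩),
      Set.indicator_of_notMem fun h => htm.not_gt h.1,
      sub_zero, sub_div, div_self (ha.trans_lt hta).ne']
  · rw [entropyKernel, if_neg htm.not_ge, max_eq_left (sub_nonneg.2 hta),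
      Set.indicator_of_notMem fun h => htm.not_ge h.2,
      Set.indicator_of_mem (show t ∈ Set.Ioc m a from ⟨htm, hta⟩),
      zero_sub, neg_sub, sub_div, div_self (hm.trans htm).ne']
  · simp [entropyKernel, htm.not_ge, hta, hta.not_ge, hta.le]

theorem intervalIntegrable_one_sub_div (ha : 0 ≤ a) (hm : 0 < m) :
    IntervalIntegrable (fun t => 1 - a / t) volume a m := by
  rcases ha.eq_or_lt with rfl | ha
  · simp
  refine ContinuousOn.intervalIntegrable
    (continuousOn_const.sub (continuousOn_const.div continuousOn_id fun t ht => ?_))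
  exact (lt_min ha hm |>.trans_le ht.1).ne'

theorem integral_one_sub_div (ha : 0 ≤ a) (hm : 0 < m) :
    ∫ t in a..m, (1 - a / t) = a * Real.log (a / m) - a + m := by
  rcases ha.eq_or_lt with rfl | ha
  · simp
  have hdiv : IntervalIntegrable (fun t => a / t) volume a m :=
    (continuousOn_const.div continuousOn_id fun t ht => (lt_min ha hm |>.trans_le ht.1).ne')
      |>.intervalIntegrable
  rw [intervalIntegral.integral_sub intervalIntegrable_const hdiv, intervalIntegral.integral_const]
  simp_rw [div_eq_mul_inv a]
  rw [intervalIntegral.integral_const_mul, integral_inv_of_pos ha hm, ← inv_div, Real.log_inv,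
    smul_eq_mul, mul_one, div_eq_mul_inv a m]
  ring

theorem integral_entropyKernel (ha0 : 0 ≤ a) (ha1 : a ≤ 1) (hm0 : 0 < m) (hm1 : m ≤ 1) :
    ∫ t in Set.Ioc (0:ℝ) 1, entropyKernel m t a = a * Real.log (a / m) - a + m := by
  have hf := intervalIntegrable_one_sub_div ha0 hm0
  simp_rw [entropyKernel_eq_indicator_sub ha0 hm0]
  rw [integral_sub (hf.1.integrable_indicator measurableSet_Ioc).integrableOn
      (hf.2.integrable_indicator measurableSet_Ioc).integrableOn,
    setIntegral_indicator measurableSet_Ioc, setIntegral_indicator measurableSet_Ioc,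
    Set.inter_eq_right.2 (Set.Ioc_subset_Ioc ha0 hm1),
    Set.inter_eq_right.2 (Set.Ioc_subset_Ioc hm0.le ha1), ← integral_one_sub_div ha0 hm0,
    intervalIntegral]

theorem abs_entropyKernel_le (ha0 : 0 ≤ a) (ha1 : a ≤ 1) (hm0 : 0 < m) (hm1 : m ≤ 1)
    (t : ℝ) : |entropyKernel m t a| ≤ 1 / m := by
  rw [entropyKernel]
  split_ifs with htm
  · rcases le_or_gt t 0 with ht | ht
    · rw [max_eq_right (by linarith), zero_div, abs_zero]
      positivity
    · rw [abs_of_nonneg (by positivity)]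
      exact (div_le_one_of_le₀ (max_le (by linarith) ht.le) ht.le).trans
        (one_le_one_div hm0 hm1)
  · have ht : 0 < t := hm0.trans (not_le.1 htm)
    rw [abs_of_nonneg (by positivity)]
    exact div_le_div₀ zero_le_one (max_le (by linarith) zero_le_one) hm0 (not_le.1 htm).le

theorem measurable_entropyKernel (m : ℝ) :
    Measurable fun p : ℝ × ℝ => entropyKernel m p.1 p.2 :=
  ((measurable_fst.sub measurable_snd).max measurable_const |>.ite
    (measurableSet_le measurable_fst measurable_const)
    ((measurable_snd.sub measurable_fst).max measurable_const)).div measurable_fst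

end EntropyKernel

theorem IsMarkov.rev {P : K → K → ℝ} {π : K → ℝ} (hP : IsMarkov P π) :
    IsMarkov (rev P π) π where
  nonneg u v := div_nonneg (mul_nonneg (hP.piPos v).le (hP.nonneg v u)) (hP.piPos u).le
  rowSum u := by
    simp_rw [_root_.rev, ← Finset.sum_div, hP.stationary, div_self (hP.piPos u).ne']
  piPos := hP.piPos
  piSum := hP.piSum
  stationary v := by
    simp_rw [_root_.rev, mul_div_cancel₀ _ (hP.piPos _).ne', ← Finset.mul_sum, hP.rowSum, mul_one]

namespace IsMarkov

variable {R : K → K → ℝ} {π : K → ℝ} (hR : IsMarkov R π)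
include hR

theorem meas_nonneg (B : Finset K) : 0 ≤ meas π B :=
  Finset.sum_nonneg fun v _ => (hR.piPos v).le

theorem meas_compl (B : Finset K) : meas π Bᶜ = 1 - meas π B := by
  rw [meas, meas, ← hR.piSum, ← Finset.sum_add_sum_compl B π, add_sub_cancel_left]

theorem meas_le_one (B : Finset K) : meas π B ≤ 1 := by
  linarith [hR.meas_compl B, hR.meas_nonneg Bᶜ]

theorem setProb_nonneg (v : K) (C : Finset K) : 0 ≤ setProb R v C :=
  Finset.sum_nonneg fun c _ => hR.nonneg v c

theorem setProb_compl (v : K) (C : Finset K) : setProb R v Cᶜ = 1 - setProb R v C := by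
  rw [setProb, setProb, ← hR.rowSum v, ← Finset.sum_add_sum_compl C, add_sub_cancel_left]

theorem setProb_le_one (v : K) (C : Finset K) : setProb R v C ≤ 1 := by
  linarith [hR.setProb_compl v C, hR.setProb_nonneg v Cᶜ]

theorem sum_mul_setProb (C : Finset K) : ∑ v, π v * setProb R v C = meas π C := by
  simp_rw [setProb, Finset.mul_sum]
  rw [Finset.sum_comm]
  exact Finset.sum_congr rfl fun c _ => hR.stationary c

theorem antitone_meas_levelSet (A : Finset K) : Antitone fun u => meas π (levelSet R A u) :=
  antitone_sum_levelSet R A fun v => (hR.piPos v).le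

theorem integral_sum_levelSet (A : Finset K) (w : K → ℝ) :
    ∫ u in Set.Ioc (0:ℝ) 1, ∑ v ∈ levelSet R A u, w v = ∑ v, w v * setProb R v A := by
  have hind : ∀ u, ∑ v ∈ levelSet R A u, w v =
      ∑ v, (Set.Iio (setProb R v A)).indicator (fun _ => w v) u := fun u => by
    simp [levelSet, Finset.sum_filter, Set.indicator]
  simp_rw [hind]
  rw [integral_finsetSum _ fun v _ => (integrable_const (w v)).indicator measurableSet_Iio]
  exact Finset.sum_congr rfl fun v _ =>
    integral_Ioc_zero_one_indicator_Iio (hR.setProb_nonneg v A) (hR.setProb_le_one v A) _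

theorem integral_meas_levelSet (A : Finset K) :
    ∫ u in Set.Ioc (0:ℝ) 1, meas π (levelSet R A u) = meas π A := by
  rw [← hR.sum_mul_setProb]
  exact hR.integral_sum_levelSet A π

theorem integrableOn_comp_meas_levelSet (A : Finset K) {φ : ℝ → ℝ} (hφ : Continuous φ) :
    IntegrableOn (fun u => φ (meas π (levelSet R A u))) (Set.Ioc 0 1) := by
  obtain ⟨C, hC⟩ := (isCompact_Icc (a := (0:ℝ)) (b := 1)).exists_bound_of_continuousOn
    hφ.continuousOn
  exact Integrable.of_bound
    (hφ.measurable.comp (hR.antitone_meas_levelSet A).measurable).aestronglyMeasurable C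
    (ae_of_all _ fun u => hC _ ⟨hR.meas_nonneg _, hR.meas_le_one _⟩)

section FracFlow

variable {S : Finset K} {g : K → ℝ} {t : ℝ}

theorem fracFlow_nonneg (hg : IsFracSub π S g t) (C : Finset K) : 0 ≤ fracFlow R π g C :=
  Finset.sum_nonneg fun v _ =>
    mul_nonneg (mul_nonneg (hg.1 v).1 (hR.piPos v).le) (hR.setProb_nonneg v C)

theorem fracFlow_le_mass (hg : IsFracSub π S g t) (C : Finset K) : fracFlow R π g C ≤ t :=
  hg.2.2 ▸ Finset.sum_le_sum fun v _ => mul_le_of_le_one_right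
    (mul_nonneg (hg.1 v).1 (hR.piPos v).le) (hR.setProb_le_one v C)

theorem fracFlow_compl (hg : IsFracSub π S g t) (A : Finset K) :
    fracFlow R π g Aᶜ = t - fracFlow R π g A := by
  simp_rw [fracFlow, hR.setProb_compl, mul_sub, mul_one, Finset.sum_sub_distrib, hg.2.2]

theorem fracFlow_eq_integral (A : Finset K) :
    fracFlow R π g A = ∫ u in Set.Ioc (0:ℝ) 1, ∑ v ∈ levelSet R A u, g v * π v :=
  (hR.integral_sum_levelSet A _).symm

theorem integral_max_sub_le_fracFlow_compl (hg : IsFracSub π S g t) (A : Finset K) :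
    ∫ u in Set.Ioc (0:ℝ) 1, max (t - meas π (levelSet R A u)) 0 ≤ fracFlow R π g Aᶜ := by
  have hπ v : 0 ≤ π v := (hR.piPos v).le
  have hW := antitone_sum_levelSet R A fun v => mul_nonneg (hg.1 v).1 (hπ v)
  have hmax : Monotone fun u => max (t - meas π (levelSet R A u)) 0 := fun _ _ huv =>
    max_le_max_right 0 (sub_le_sub_left (hR.antitone_meas_levelSet A huv) t)
  have hsum : ∫ u in Set.Ioc (0:ℝ) 1,
      (∑ v ∈ levelSet R A u, g v * π v + max (t - meas π (levelSet R A u)) 0) ≤ t := by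
    refine (setIntegral_mono_on (hW.intervalIntegrable.1.add hmax.intervalIntegrable.1)
      (integrableOn_const (by simp)) measurableSet_Ioc fun u _ => ?_).trans_eq (by simp)
    simp only [Pi.add_apply]
    rcases le_total t (meas π (levelSet R A u)) with h | h
    · linarith [max_eq_right (sub_nonpos.2 h), hg.sum_le_mass hπ (levelSet R A u)]
    · linarith [max_eq_left (sub_nonneg.2 h), hg.sum_le_meas hπ (levelSet R A u)]
  rw [integral_add hW.intervalIntegrable.1 hmax.intervalIntegrable.1] at hsum
  rw [hR.fracFlow_compl hg, hR.fracFlow_eq_integral]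
  linarith

theorem integral_max_sub_le_fracFlow (hg : IsFracSub π S g (1 - t)) (A : Finset K) :
    ∫ u in Set.Ioc (0:ℝ) 1, max (meas π (levelSet R A u) - t) 0 ≤ fracFlow R π g A := by
  have hπ v : 0 ≤ π v := (hR.piPos v).le
  have hW := antitone_sum_levelSet R A fun v => mul_nonneg (hg.1 v).1 (hπ v)
  have hmax : Antitone fun u => max (meas π (levelSet R A u) - t) 0 := fun _ _ huv =>
    max_le_max_right 0 (sub_le_sub_right (hR.antitone_meas_levelSet A huv) t)
  rw [hR.fracFlow_eq_integral]
  refine setIntegral_mono_on hmax.intervalIntegrable.1 hW.intervalIntegrable.1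
    measurableSet_Ioc fun u _ =>
      max_le ?_ (Finset.sum_nonneg fun v _ => mul_nonneg (hg.1 v).1 (hπ v))
  linarith [hg.mass_sub_meas_compl_le_sum hπ (levelSet R A u), hR.meas_compl (levelSet R A u)]

end FracFlow

section MinFlow

variable {B C : Finset K}

theorem minFlow_nonneg (t : ℝ) : 0 ≤ minFlow R π B C t :=
  Real.sInf_nonneg fun _ ⟨_, hg, hq⟩ => hq ▸ hR.fracFlow_nonneg hg C

theorem minFlow_le_fracFlow {g : K → ℝ} {t : ℝ} (hg : IsFracSub π B g t) :
    minFlow R π B C t ≤ fracFlow R π g C :=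
  csInf_le ⟨0, fun _ ⟨_, hg', hq⟩ => hq ▸ hR.fracFlow_nonneg hg' C⟩ ⟨g, hg, rfl⟩

theorem minFlow_le_mass (hB : 0 < meas π B) {t : ℝ} (ht0 : 0 ≤ t) (htB : t ≤ meas π B) :
    minFlow R π B C t ≤ t := by
  obtain ⟨g, hg⟩ := exists_isFracSub hB ht0 htB
  exact (hR.minFlow_le_fracFlow hg).trans (hR.fracFlow_le_mass hg C)

theorem minFlow_monotoneOn (hB : 0 < meas π B) :
    MonotoneOn (minFlow R π B C) (Set.Icc 0 (meas π B)) := by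
  rintro s ⟨hs0, -⟩ t ⟨ht0, htB⟩ hst
  refine le_minFlow hB ht0 htB fun g hg => ?_
  have hc0 : 0 ≤ s / t := div_nonneg hs0 ht0
  have hc1 : s / t ≤ 1 := div_le_one_of_le₀ hst ht0
  have hmass : s / t * t = s := div_mul_cancel_of_imp fun h => le_antisymm (h ▸ hst) hs0
  calc minFlow R π B C s ≤ fracFlow R π ((s / t) • g) C :=
        hR.minFlow_le_fracFlow (by simpa only [hmass] using hg.smul hc0 hc1)
    _ = s / t * fracFlow R π g C := fracFlow_smul R π g C _
    _ ≤ fracFlow R π g C := mul_le_of_le_one_left (hR.fracFlow_nonneg hg C) hc1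

end MinFlow

variable {A : Finset K}

theorem Psi_nonneg (t : ℝ) : 0 ≤ Psi R π A t := by
  unfold Psi
  split_ifs <;> exact hR.minFlow_nonneg _

theorem Psi_le_min_div (hA0 : 0 < meas π A) (hA : meas π A ≤ 1 / 2) {t : ℝ} (ht0 : 0 ≤ t)
    (ht1 : t ≤ 1) : Psi R π A t ≤ min t (1 - t) / meas π A := by
  rcases le_or_gt t (meas π A) with htA | htA
  · rw [Psi_of_le htA, min_eq_left (by linarith)]
    exact (hR.minFlow_le_mass hA0 ht0 htA).trans (le_div_self ht0 hA0 (by linarith))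
  · have hAc := hR.meas_compl A
    rw [Psi_of_lt htA]
    refine (hR.minFlow_le_mass (by linarith) (by linarith) (by linarith)).trans ?_
    rw [le_div_iff₀ hA0]
    exact le_min (by nlinarith) (by nlinarith)

theorem integral_entropyKernel_le_Psi_div (hA0 : 0 < meas π A) {t : ℝ} (ht0 : 0 ≤ t)
    (ht1 : t ≤ 1) :
    ∫ u in Set.Ioc (0:ℝ) 1, entropyKernel (meas π A) t (meas π (levelSet R A u)) ≤
      Psi R π A t / t := by
  simp only [entropyKernel]
  rw [integral_div]
  refine div_le_div_of_nonneg_right ?_ ht0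
  by_cases htA : t ≤ meas π A
  · simp only [htA, if_true]
    rw [Psi_of_le htA]
    exact le_minFlow hA0 ht0 htA fun g hg => hR.integral_max_sub_le_fracFlow_compl hg A
  · have hAc := hR.meas_compl A
    simp only [htA, if_false]
    rw [Psi_of_lt (not_le.1 htA)]
    exact le_minFlow (by linarith) (by linarith) (by linarith)
      fun g hg => hR.integral_max_sub_le_fracFlow hg A

theorem Psi_div_le_div_min (hA0 : 0 < meas π A) (hA : meas π A ≤ 1 / 2) {t : ℝ}
    (ht : t ∈ Set.Ioc (0:ℝ) 1) : Psi R π A t / t ≤ Psi R π A t / min t (1 - t) := by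
  rcases (hR.Psi_nonneg t).eq_or_lt with hzero | hpos
  · rw [← hzero, zero_div, zero_div]
  have hmin : 0 < min t (1 - t) :=
    (div_pos_iff_of_pos_right hA0).1 (hpos.trans_le (hR.Psi_le_min_div hA0 hA ht.1.le ht.2))
  exact div_le_div_of_nonneg_left hpos.le hmin (min_le_left _ _)

theorem aemeasurable_Psi (hA0 : 0 < meas π A) :
    AEMeasurable (Psi R π A) (volume.restrict (Set.Ioc 0 1)) := by
  have hAc := hR.meas_compl A
  rw [← Set.Ioc_union_Ioc_eq_Ioc hA0.le (hR.meas_le_one A), aemeasurable_union_iff]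
  constructor
  · refine aemeasurable_restrict_of_monotoneOn measurableSet_Ioc fun s hs t ht hst => ?_
    rw [Psi_of_le hs.2, Psi_of_le ht.2]
    exact hR.minFlow_monotoneOn hA0 ⟨hs.1.le, hs.2⟩ ⟨ht.1.le, ht.2⟩ hst
  · refine aemeasurable_restrict_of_antitoneOn measurableSet_Ioc fun s hs t ht hst => ?_
    rw [Psi_of_lt hs.1, Psi_of_lt ht.1]
    exact hR.minFlow_monotoneOn (by linarith [hs.1, ht.2])
      ⟨by linarith [ht.2], by linarith [ht.1]⟩ ⟨by linarith [hs.2], by linarith [hs.1]⟩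
      (by linarith)

theorem integrableOn_Psi_div_min (hA0 : 0 < meas π A) (hA : meas π A ≤ 1 / 2) :
    IntegrableOn (fun t => Psi R π A t / min t (1 - t)) (Set.Ioc 0 1) := by
  refine Integrable.of_bound ((hR.aemeasurable_Psi hA0).div
    (by fun_prop : Measurable fun t : ℝ => min t (1 - t)).aemeasurable).aestronglyMeasurable
    (1 / meas π A) (ae_restrict_of_forall_mem measurableSet_Ioc fun t ht => ?_)
  have hmin : 0 ≤ min t (1 - t) := le_min ht.1.le (sub_nonneg.2 ht.2)
  rw [Real.norm_of_nonneg (div_nonneg (hR.Psi_nonneg t) hmin)]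
  refine div_le_of_le_mul₀ hmin (by positivity) ?_
  rw [one_div_mul_eq_div]
  exact hR.Psi_le_min_div hA0 hA ht.1.le ht.2

theorem integrable_entropyKernel_meas_levelSet (hA0 : 0 < meas π A) :
    Integrable (Function.uncurry fun t u => entropyKernel (meas π A) t (meas π (levelSet R A u)))
      ((volume.restrict (Set.Ioc 0 1)).prod (volume.restrict (Set.Ioc 0 1))) :=
  Integrable.of_bound ((measurable_entropyKernel _).comp (measurable_fst.prodMk
      ((hR.antitone_meas_levelSet A).measurable.comp measurable_snd))).aestronglyMeasurable
    (1 / meas π A) (ae_of_all _ fun _ => abs_entropyKernel_le (hR.meas_nonneg _)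
      (hR.meas_le_one _) hA0 (hR.meas_le_one A) _)

theorem integral_integral_entropyKernel (hA0 : 0 < meas π A) :
    ∫ t in Set.Ioc (0:ℝ) 1, ∫ u in Set.Ioc (0:ℝ) 1,
        entropyKernel (meas π A) t (meas π (levelSet R A u)) =
      meas π A * ∫ u in Set.Ioc (0:ℝ) 1, meas π (levelSet R A u) / meas π A *
        Real.log (meas π (levelSet R A u) / meas π A) := by
  rw [integral_integral_swap (hR.integrable_entropyKernel_meas_levelSet hA0)]
  set m := meas π A
  set a := fun u => meas π (levelSet R A u)
  have hent : IntegrableOn (fun u => a u / m * Real.log (a u / m)) (Set.Ioc 0 1) :=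
    hR.integrableOn_comp_meas_levelSet A (Real.continuous_mul_log.comp (continuous_id.div_const m))
  have ha : IntegrableOn a (Set.Ioc 0 1) := hR.integrableOn_comp_meas_levelSet A continuous_id
  have hm : IntegrableOn (fun _ => m) (Set.Ioc (0:ℝ) 1) := integrableOn_const (by simp)
  have hma : IntegrableOn (fun u => m - a u) (Set.Ioc (0:ℝ) 1) := hm.sub ha
  calc ∫ u in Set.Ioc (0:ℝ) 1, ∫ t in Set.Ioc (0:ℝ) 1, entropyKernel m t (a u)
      = ∫ u in Set.Ioc (0:ℝ) 1, (m * (a u / m * Real.log (a u / m)) + (m - a u)) := by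
        refine setIntegral_congr_fun measurableSet_Ioc fun u _ => ?_
        rw [integral_entropyKernel (hR.meas_nonneg _) (hR.meas_le_one _) hA0 (hR.meas_le_one A)]
        field_simp
        ring
    _ = m * ∫ u in Set.Ioc (0:ℝ) 1, a u / m * Real.log (a u / m) := by
        rw [integral_add (hent.const_mul m) hma, integral_const_mul, integral_sub hm ha,
          hR.integral_meas_levelSet]
        simp [m]

theorem integral_mul_log_le_psiMod (hA0 : 0 < meas π A) (hA : meas π A ≤ 1 / 2) :
    ∫ u in (0:ℝ)..1, (meas π (levelSet R A u) / meas π A) *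
        Real.log (meas π (levelSet R A u) / meas π A) ≤ psiMod R π A := by
  rw [psiMod, intervalIntegral.integral_of_le zero_le_one,
    intervalIntegral.integral_of_le zero_le_one, le_div_iff₀ hA0, mul_comm,
    ← hR.integral_integral_entropyKernel hA0]
  exact setIntegral_mono_on (hR.integrable_entropyKernel_meas_levelSet hA0).integral_prod_left
    (hR.integrableOn_Psi_div_min hA0 hA) measurableSet_Ioc fun t ht =>
      (hR.integral_entropyKernel_le_Psi_div hA0 ht.1.le ht.2).trans
        (hR.Psi_div_le_div_min hA0 hA ht)

end IsMarkov

theorem modified_spread_ge_entropy_integral_general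
    (P : K → K → ℝ) (π : K → ℝ) (A : Finset K)
    (hM : IsMarkov P π)
    (hA0 : 0 < meas π A) (hA : meas π A ≤ 1 / 2) :
    psiMod (rev P π) π A ≥
      ∫ u in (0:ℝ)..(1:ℝ),
        (meas π (levelSet (rev P π) A u) / meas π A) *
          Real.log (meas π (levelSet (rev P π) A u) / meas π A) :=
  hM.rev.integral_mul_log_le_psiMod hA0 hA

/-- `ψ̄_mod(A) ≥ ∫₀¹ (π(A_u)/π(A))·log(π(A_u)/π(A)) du`
(with the convention `0·log 0 = 0`, automatic since `Real.log 0 = 0`). -/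
theorem modified_spread_ge_entropy_integral
    (P : K → K → ℝ) (π : K → ℝ) (A : Finset K)
    (hM : IsMarkov P π) (hlazy : IsLazy P)
    (hirr : MCIrreducible P) (hap : MCAperiodic P)
    (hA0 : 0 < meas π A) (hA : meas π A ≤ 1 / 2) :
    psiMod (rev P π) π A ≥
      ∫ u in (0:ℝ)..(1:ℝ),
        (meas π (levelSet (rev P π) A u) / meas π A) *
          Real.log (meas π (levelSet (rev P π) A u) / meas π A) :=
  modified_spread_ge_entropy_integral_general P π A hM hA0 hA
end
end

section
/- Let P be a lazy, irreducible, aperiodic, reversible Markov chain on a finite state space K with stationary distribution π. Then the spectral gap satisfies λ ≤ 4·ψ_big(1/2). -/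
open Finset MeasureTheory

noncomputable section

attribute [local instance] Classical.propDecidable

variable {K : Type*} [Fintype K]

/-! Testing the spectral gap on the indicator of `A` gives
`λ ≤ Q(A,Aᶜ) / (π(A) π(Aᶜ)) ≤ 2 Q(A,Aᶜ) / π(A)` when `π(A) ≤ 1/2`. Rescaling that indicator
yields a fractional subset of `A` of every measure `t ≤ π(A)`, so
`Ψ_big(t,Aᶜ) ≥ t Q(A,Aᶜ) / π(A)`, and integrating over `[0, π(A)]` gives
`ψ_big(A) ≥ Q(A,Aᶜ) / (2 π(A))`. The integral is meaningful because `Ψ_big(·,Aᶜ)` is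
monotone: a fractional subset can be pushed up towards the indicator of `A`. -/

variable {P : K → K → ℝ} {π : K → ℝ}

lemma ergFlow_nonneg (hM : IsMarkov P π) (A B : Finset K) : 0 ≤ ergFlow P π A B :=
  sum_nonneg fun u _ => sum_nonneg fun v _ => mul_nonneg (hM.piPos u).le (hM.nonneg u v)

lemma ergFlow_add_ergFlow_compl_right (hrow : ∀ u, ∑ v, P u v = 1) (A B : Finset K) :
    ergFlow P π A B + ergFlow P π A Bᶜ = meas π A := by
  unfold ergFlow meas
  rw [← sum_add_distrib]
  refine sum_congr rfl fun u _ => ?_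
  rw [sum_add_sum_compl, ← mul_sum, hrow, mul_one]

lemma ergFlow_add_ergFlow_compl_left (hstat : ∀ v, ∑ u, π u * P u v = π v) (A B : Finset K) :
    ergFlow P π B A + ergFlow P π Bᶜ A = meas π A := by
  unfold ergFlow meas
  rw [sum_comm, sum_comm (s := Bᶜ), ← sum_add_distrib]
  refine sum_congr rfl fun v _ => ?_
  rw [sum_add_sum_compl, hstat]

lemma ergFlow_compl_symm (hM : IsMarkov P π) (A : Finset K) :
    ergFlow P π Aᶜ A = ergFlow P π A Aᶜ := by
  linarith [ergFlow_add_ergFlow_compl_right (π := π) hM.rowSum A A,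
    ergFlow_add_ergFlow_compl_left hM.stationary A A]

lemma dirichletForm_indicator (hM : IsMarkov P π) (A : Finset K) :
    dirichletForm P π (fun v => if v ∈ A then 1 else 0) = ergFlow P π A Aᶜ := by
  have hcut : ∀ u v, π u * P u v * ((if u ∈ A then 1 else 0) - (if v ∈ A then 1 else 0)) ^ 2 =
      (if u ∈ A then if v ∈ Aᶜ then π u * P u v else 0 else 0) +
      (if u ∈ Aᶜ then if v ∈ A then π u * P u v else 0 else 0) := by
    intro u v
    by_cases u ∈ A <;> by_cases v ∈ A <;> simp [*]
  unfold dirichletForm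
  simp only [hcut, sum_add_distrib, sum_ite_irrel, sum_const_zero, sum_ite_mem, univ_inter]
  rw [← ergFlow, ← ergFlow, ergFlow_compl_symm hM]
  ring

lemma varPi_indicator (π : K → ℝ) (A : Finset K) :
    varPi π (fun v => if v ∈ A then 1 else 0) = meas π A - meas π A ^ 2 := by
  simp [varPi, meas, sum_ite_mem]

lemma varPi_nonneg (hπ : ∀ v, 0 ≤ π v) (hsum : ∑ v, π v = 1) (f : K → ℝ) :
    0 ≤ varPi π f := by
  have jensen := (even_two.convexOn_pow (𝕜 := ℝ)).map_sum_le (fun v _ => hπ v) hsum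
    (p := f) fun _ _ => Set.mem_univ _
  simp only [smul_eq_mul] at jensen
  unfold varPi
  linarith

lemma dirichletForm_nonneg (hM : IsMarkov P π) (f : K → ℝ) : 0 ≤ dirichletForm P π f :=
  mul_nonneg (by norm_num) <| sum_nonneg fun u _ => sum_nonneg fun v _ =>
    mul_nonneg (mul_nonneg (hM.piPos u).le (hM.nonneg u v)) (sq_nonneg _)

lemma specGap_le (hM : IsMarkov P π) {f : K → ℝ} (hf : ∃ u v, f u ≠ f v) :
    specGap P π ≤ dirichletForm P π f / varPi π f := by
  refine csInf_le ⟨0, ?_⟩ ⟨f, hf, rfl⟩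
  rintro r ⟨g, -, rfl⟩
  exact div_nonneg (dirichletForm_nonneg hM g)
    (varPi_nonneg (fun v => (hM.piPos v).le) hM.piSum g)

lemma specGap_le_ergFlow_div (hM : IsMarkov P π) {A : Finset K} (hA : 0 < meas π A)
    (hA' : meas π A < 1) :
    specGap P π ≤ ergFlow P π A Aᶜ / (meas π A - meas π A ^ 2) := by
  have hAc : meas π Aᶜ ≠ 0 := by
    have : meas π A + meas π Aᶜ = 1 := (sum_add_sum_compl A π).trans hM.piSum
    linarith
  obtain ⟨u, hu, -⟩ := exists_ne_zero_of_sum_ne_zero hA.ne'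
  obtain ⟨v, hv, -⟩ := exists_ne_zero_of_sum_ne_zero hAc
  rw [← dirichletForm_indicator hM, ← varPi_indicator]
  exact specGap_le hM ⟨u, v, by simp_all⟩

lemma specGap_of_subsingleton [Subsingleton K] : specGap P π = 0 := by
  rw [specGap, ← Real.sInf_empty]
  congr 1
  refine Set.eq_empty_of_forall_notMem ?_
  rintro r ⟨f, ⟨u, v, huv⟩, -⟩
  exact huv (congrArg f (Subsingleton.elim u v))

lemma setProb_le_one (hP : ∀ u v, 0 ≤ P u v) (hrow : ∀ u, ∑ v, P u v = 1) (v : K)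
    (C : Finset K) : setProb P v C ≤ 1 :=
  hrow v ▸ sum_le_univ_sum_of_nonneg fun _ => hP _ _

lemma fracFlow_nonneg (hM : IsMarkov P π) {g : K → ℝ} (hg : ∀ v, 0 ≤ g v) (C : Finset K) :
    0 ≤ fracFlow P π g C :=
  sum_nonneg fun v _ =>
    mul_nonneg (mul_nonneg (hg v) (hM.piPos v).le) (sum_nonneg fun _ _ => hM.nonneg _ _)

lemma fracFlow_mono (hM : IsMarkov P π) {g g' : K → ℝ} (hg : ∀ v, g v ≤ g' v)
    (C : Finset K) : fracFlow P π g C ≤ fracFlow P π g' C :=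
  sum_le_sum fun v _ => mul_le_mul_of_nonneg_right
    (mul_le_mul_of_nonneg_right (hg v) (hM.piPos v).le) (sum_nonneg fun _ _ => hM.nonneg _ _)

lemma fracFlow_mul_indicator (c : ℝ) (A C : Finset K) :
    fracFlow P π (fun v => c * if v ∈ A then 1 else 0) C = c * ergFlow P π A C := by
  simp [fracFlow, ergFlow, setProb, mul_sum, sum_ite_mem, mul_comm, mul_left_comm]

lemma IsFracSub.fracFlow_le (hM : IsMarkov P π) {S : Finset K} {g : K → ℝ} {t : ℝ}
    (hg : IsFracSub π S g t) (C : Finset K) : fracFlow P π g C ≤ t :=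
  hg.2.2 ▸ sum_le_sum fun v _ => mul_le_of_le_one_right (mul_nonneg (hg.1 v).1 (hM.piPos v).le)
    (setProb_le_one hM.nonneg hM.rowSum v C)

lemma isFracSub_div_mul_indicator {A : Finset K} (hA : 0 < meas π A) {t : ℝ} (ht0 : 0 ≤ t)
    (ht : t ≤ meas π A) :
    IsFracSub π A (fun v => t / meas π A * if v ∈ A then 1 else 0) t := by
  have hc0 : 0 ≤ t / meas π A := div_nonneg ht0 hA.le
  have hc1 : t / meas π A ≤ 1 := div_le_one_of_le₀ ht hA.le
  refine ⟨fun v => ?_, fun v hv => by simp [hv], ?_⟩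
  · by_cases hv : v ∈ A <;> simp [hv, hc0, hc1]
  · simp only [mul_assoc, ← mul_sum, ite_mul, one_mul, zero_mul, sum_ite_mem, univ_inter]
    exact div_mul_cancel₀ t hA.ne'

lemma IsFracSub.exists_ge {A : Finset K} {g : K → ℝ} {t t' : ℝ} (hg : IsFracSub π A g t)
    (htt' : t ≤ t') (ht' : t' ≤ meas π A) :
    ∃ g', IsFracSub π A g' t' ∧ ∀ v, g v ≤ g' v := by
  set s := (t' - t) / (meas π A - t)
  have hs0 : 0 ≤ s := div_nonneg (by linarith) (by linarith)
  have hs1 : s ≤ 1 := div_le_one_of_le₀ (by linarith) (by linarith)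
  have hgap : ∀ v, 0 ≤ (if v ∈ A then 1 else 0) - g v := fun v => by
    by_cases hv : v ∈ A <;> simp [hv, (hg.1 v).2, hg.2.1 v]
  have hmeas : ∑ v, (g v + s * ((if v ∈ A then 1 else 0) - g v)) * π v =
      t + s * (meas π A - t) := by
    simp only [add_mul, mul_assoc, sub_mul, sum_add_distrib, ← mul_sum, sum_sub_distrib,
      ite_mul, one_mul, zero_mul, sum_ite_mem, univ_inter, hg.2.2, meas]
  refine ⟨fun v => g v + s * ((if v ∈ A then 1 else 0) - g v),
    ⟨fun v => ⟨?_, ?_⟩, fun v hv => by simp [hv, hg.2.1 v hv], ?_⟩,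
    fun v => le_add_of_nonneg_right (mul_nonneg hs0 (hgap v))⟩
  · exact add_nonneg (hg.1 v).1 (mul_nonneg hs0 (hgap v))
  · have : (if v ∈ A then 1 else 0 : ℝ) ≤ 1 := by split_ifs <;> norm_num
    nlinarith [hgap v]
  · rw [hmeas]
    rcases htt'.eq_or_lt with rfl | hlt
    · simp [s]
    · rw [div_mul_cancel₀ _ (by linarith)]
      ring

lemma le_psiSup (hM : IsMarkov P π) {A : Finset K} {g : K → ℝ} {t : ℝ}
    (hg : IsFracSub π A g t) : fracFlow P π g Aᶜ ≤ PsiSup P π A t := by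
  refine le_csSup ⟨t, ?_⟩ ⟨g, hg, rfl⟩
  rintro q ⟨g', hg', rfl⟩
  exact hg'.fracFlow_le hM Aᶜ

lemma psiSup_nonneg (hM : IsMarkov P π) (A : Finset K) (t : ℝ) : 0 ≤ PsiSup P π A t := by
  refine Real.sSup_nonneg ?_
  rintro q ⟨g, hg, rfl⟩
  exact fracFlow_nonneg hM (fun v => (hg.1 v).1) Aᶜ

lemma div_mul_ergFlow_le_psiSup (hM : IsMarkov P π) {A : Finset K} (hA : 0 < meas π A)
    {t : ℝ} (ht0 : 0 ≤ t) (ht : t ≤ meas π A) :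
    t / meas π A * ergFlow P π A Aᶜ ≤ PsiSup P π A t := by
  rw [← fracFlow_mul_indicator]
  exact le_psiSup hM (isFracSub_div_mul_indicator hA ht0 ht)

lemma psiSup_monotoneOn (hM : IsMarkov P π) {A : Finset K} (hA : 0 < meas π A) :
    MonotoneOn (PsiSup P π A) (Set.Icc 0 (meas π A)) := by
  rintro t ⟨ht0, ht⟩ t' ⟨-, ht'⟩ htt'
  refine csSup_le ⟨_, _, isFracSub_div_mul_indicator hA ht0 ht, rfl⟩ ?_
  rintro q ⟨g, hg, rfl⟩
  obtain ⟨g', hg', hle⟩ := hg.exists_ge htt' ht'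
  exact (fracFlow_mono hM hle Aᶜ).trans (le_psiSup hM hg')

lemma ergFlow_div_le_psiBig (hM : IsMarkov P π) {A : Finset K} (hA : 0 < meas π A) :
    ergFlow P π A Aᶜ / (2 * meas π A) ≤ psiBig P π A := by
  have hmono : MonotoneOn (PsiSup P π A) (Set.uIcc 0 (meas π A)) := by
    rw [Set.uIcc_of_le hA.le]
    exact psiSup_monotoneOn hM hA
  unfold psiBig
  rw [le_div_iff₀ (by positivity)]
  calc ergFlow P π A Aᶜ / (2 * meas π A) * meas π A ^ 2
      = ∫ t in (0 : ℝ)..meas π A, t / meas π A * ergFlow P π A Aᶜ := by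
        simp only [intervalIntegral.integral_mul_const, intervalIntegral.integral_div, integral_id]
        field_simp
        ring
    _ ≤ ∫ t in (0 : ℝ)..meas π A, PsiSup P π A t :=
        intervalIntegral.integral_mono_on hA.le
          (by apply Continuous.intervalIntegrable; fun_prop) hmono.intervalIntegrable
          fun t ht => div_mul_ergFlow_le_psiSup hM hA ht.1 ht.2

lemma psiBigSize_nonneg (hM : IsMarkov P π) (x : ℝ) : 0 ≤ psiBigSize P π x := by
  refine Real.sInf_nonneg ?_
  rintro r ⟨A, hA, -, rfl⟩
  exact div_nonneg
    (intervalIntegral.integral_nonneg hA.le fun t _ => psiSup_nonneg hM A t) (sq_nonneg _)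

lemma specGap_le_four_psiBig (hM : IsMarkov P π) {A : Finset K} (hA : 0 < meas π A)
    (hA' : meas π A ≤ 1 / 2) : specGap P π ≤ 4 * psiBig P π A :=
  calc specGap P π ≤ ergFlow P π A Aᶜ / (meas π A - meas π A ^ 2) :=
        specGap_le_ergFlow_div hM hA (by linarith)
    _ ≤ ergFlow P π A Aᶜ / (meas π A / 2) :=
        div_le_div_of_nonneg_left (ergFlow_nonneg hM A Aᶜ) (by positivity) (by nlinarith)
    _ = 4 * (ergFlow P π A Aᶜ / (2 * meas π A)) := by ring
    _ ≤ 4 * psiBig P π A := by gcongr; exact ergFlow_div_le_psiBig hM hA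

lemma exists_meas_pos_le_half [Nontrivial K] (hM : IsMarkov P π) :
    ∃ A : Finset K, 0 < meas π A ∧ meas π A ≤ 1 / 2 := by
  obtain ⟨u, v, huv⟩ := exists_pair_ne K
  have hpair : π u + π v ≤ 1 := by
    rw [← sum_pair huv, ← hM.piSum]
    exact sum_le_univ_sum_of_nonneg fun w => (hM.piPos w).le
  rcases le_total (π u) (π v) with h | h
  · exact ⟨{u}, by simpa [meas] using hM.piPos u, by rw [meas, sum_singleton]; linarith⟩
  · exact ⟨{v}, by simpa [meas] using hM.piPos v, by rw [meas, sum_singleton]; linarith⟩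

theorem gap_le_four_psiBig_general
    (P : K → K → ℝ) (π : K → ℝ)
    (hM : IsMarkov P π) :
    specGap P π ≤ 4 * psiBigSize P π (1 / 2) := by
  rcases subsingleton_or_nontrivial K with hK | hK
  · rw [specGap_of_subsingleton]
    exact mul_nonneg zero_le_four (psiBigSize_nonneg hM _)
  · obtain ⟨A, hA, hA'⟩ := exists_meas_pos_le_half hM
    have : specGap P π / 4 ≤ psiBigSize P π (1 / 2) := by
      refine le_csInf ⟨_, A, hA, hA', rfl⟩ ?_
      rintro r ⟨B, hB, hB', rfl⟩
      linarith [specGap_le_four_psiBig hM hB hB']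
    linarith

/-- for a lazy, irreducible, aperiodic, reversible chain,
`λ ≤ 4·ψ_big(1/2)`. -/
theorem gap_le_four_psiBig
    (P : K → K → ℝ) (π : K → ℝ)
    (hM : IsMarkov P π) (hlazy : IsLazy P)
    (hirr : MCIrreducible P) (hap : MCAperiodic P)
    (hrev : IsReversible P π) :
    specGap P π ≤ 4 * psiBigSize P π (1 / 2) :=
  gap_le_four_psiBig_general P π hM
end
end
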